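/- Let (ℬ ⊆ 𝒜, E) be a subalgebra system with inclusion matrix A ∈ M_{s×r}(ℕ) and dimension vectors ñ, m̃ satisfying A m̃ = ñ. If (ℬ ⊆ 𝒜, E) admits a unitary orthonormal basis consisting of d unitaries, then Aᵗ ñ = d m̃; consequently Aᵗ A m̃ = d m̃ and A Aᵗ ñ = d ñ. -/

import Mathlib

open Finset Matrix

/-!
Right multiplication by `ι e` on `𝒜` factors through the basis as
`∑ₜ (Wₜ · ι(-)) ∘ (E(Wₜ* ·) · e)`, while each reversed composite `ℬ → 𝒜 → ℬ` is right
multiplication by `e` on `ℬ`. Cyclicity of the trace gives `Tr_𝒜(R_{ι e}) = d · Tr_ℬ(R_e)`;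
for `e` the unit of `M_{m_j}` this reads `∑ᵢ nᵢ aᵢⱼ mⱼ = d mⱼ²`.
-/

/-- The unital inclusion of the multi-matrix algebra ℬ = ⊕_j M_{m_j} into
𝒜 = ⊕_i M_{n_i}, where M_{m_j} appears a_{ij} times in the i-th summand. -/
def multiMatrixIncl (s r : ℕ) (m : Fin r → ℕ) (a : Fin s → Fin r → ℕ)
    (Y : ∀ j, Matrix (Fin (m j)) (Fin (m j)) ℂ) :
    ∀ i, Matrix ((j : Fin r) × (Fin (a i j) × Fin (m j)))
      ((j : Fin r) × (Fin (a i j) × Fin (m j))) ℂ :=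
  fun i p q =>
    if h : p.1 = q.1 then
      (if (h ▸ p.2).1 = q.2.1 then Y q.1 ((h ▸ p.2).2) q.2.2 else 0)
    else 0

namespace LinearMap

variable {R ι : Type*} [CommRing R] [Fintype ι] [DecidableEq ι] {φ : ι → Type*}
  [∀ i, AddCommGroup (φ i)] [∀ i, Module R (φ i)]

theorem piMap_eq_sum_single_comp_proj (f : ∀ i, φ i →ₗ[R] φ i) :
    piMap f = ∑ i, single R φ i ∘ₗ f i ∘ₗ proj i := by
  ext j x k
  simp

theorem trace_piMap [∀ i, Module.Free R (φ i)] [∀ i, Module.Finite R (φ i)]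
    (f : ∀ i, φ i →ₗ[R] φ i) :
    trace R _ (piMap f) = ∑ i, trace R _ (f i) := by
  rw [piMap_eq_sum_single_comp_proj, map_sum]
  refine Finset.sum_congr rfl fun i _ => ?_
  rw [trace_comp_comm', comp_assoc, proj_comp_single_same, comp_id]

variable {M N : Type*} [AddCommGroup M] [Module R M] [Module.Free R M] [Module.Finite R M]
  [AddCommGroup N] [Module R N] [Module.Free R N] [Module.Finite R N]

theorem trace_sum_comp_of_comp_eq {κ : Type*} [Fintype κ] (u : κ → N →ₗ[R] M)
    (v : κ → M →ₗ[R] N) (g : N →ₗ[R] N) (h : ∀ t, v t ∘ₗ u t = g) :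
    trace R M (∑ t, u t ∘ₗ v t) = Fintype.card κ * trace R N g := by
  simp [map_sum, trace_comp_comm', h]

end LinearMap

theorem Matrix.trace_mulRight {R n : Type*} [CommRing R] [Fintype n] [DecidableEq n]
    (P : Matrix n n R) :
    LinearMap.trace R _ (LinearMap.mulRight R P) = Fintype.card n * P.trace := calc
  -- `X * P` acts on each row `X i` of `X` separately, as `X i ᵥ* P`.
  _ = LinearMap.trace R (n → n → R) (LinearMap.piMap fun _ => P.vecMulLinear) := rfl
  _ = _ := by
    rw [LinearMap.trace_piMap]
    simp [← Matrix.mulVecLin_transpose, ← Matrix.toLin'_apply']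

theorem LinearMap.trace_mulRight_pi {R ι : Type*} [CommRing R] [Fintype ι] [DecidableEq ι]
    {n : ι → Type*} [∀ i, Fintype (n i)] [∀ i, DecidableEq (n i)]
    (p : ∀ i, Matrix (n i) (n i) R) :
    trace R _ (mulRight R p) = ∑ i, Fintype.card (n i) * (p i).trace := calc
  _ = trace R _ (piMap fun i => mulRight R (p i)) := rfl
  _ = _ := by simp only [trace_piMap, Matrix.trace_mulRight]

section QuasiBasis

variable {R A B : Type*} [CommRing R] [Ring A] [Algebra R A] [Module.Free R A]
  [Module.Finite R A] [Ring B] [Algebra R B] [Module.Free R B] [Module.Finite R B]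

theorem trace_mulRight_incl_eq_card_mul {ι : Type*} [Fintype ι] (incl : B →ₗ[R] A)
    (E : A →ₗ[R] B) (hE : ∀ X Z, E (X * incl Z) = E X * Z) (u v : ι → A)
    (huv : ∀ t, E (v t * u t) = 1) (hbasis : ∀ X, X = ∑ t, u t * incl (E (v t * X)))
    (e : B) :
    LinearMap.trace R A (LinearMap.mulRight R (incl e)) =
      Fintype.card ι * LinearMap.trace R B (LinearMap.mulRight R e) := by
  have hsum : LinearMap.mulRight R (incl e) = ∑ t, (LinearMap.mulLeft R (u t) ∘ₗ incl) ∘ₗ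
      (LinearMap.mulRight R e ∘ₗ E ∘ₗ LinearMap.mulLeft R (v t)) := by
    ext X
    conv_lhs => rw [LinearMap.mulRight_apply, hbasis (X * incl e)]
    simp [← mul_assoc, hE]
  rw [hsum]
  refine LinearMap.trace_sum_comp_of_comp_eq _ _ _ fun t => ?_
  ext Y
  simp [← mul_assoc, hE, huv]

end QuasiBasis

section multiMatrixIncl

variable (s r : ℕ) (m : Fin r → ℕ) (a : Fin s → Fin r → ℕ)

theorem multiMatrixIncl_one : multiMatrixIncl s r m a 1 = 1 := by
  funext i
  ext ⟨j, u, v⟩ ⟨j', u', v'⟩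
  obtain rfl | hj := eq_or_ne j j'
  · simp [multiMatrixIncl, Matrix.one_apply, ite_and]
  · simp [multiMatrixIncl, hj]

@[simps]
noncomputable def multiMatrixInclLinear :
    (∀ j, Matrix (Fin (m j)) (Fin (m j)) ℂ) →ₗ[ℂ]
      (∀ i, Matrix ((j : Fin r) × (Fin (a i j) × Fin (m j)))
        ((j : Fin r) × (Fin (a i j) × Fin (m j))) ℂ) where
  toFun := multiMatrixIncl s r m a
  map_add' Y Z := by
    funext i; ext p q
    simp only [multiMatrixIncl, Pi.add_apply, Matrix.add_apply]
    split_ifs <;> simp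
  map_smul' c Y := by
    funext i; ext p q
    simp only [multiMatrixIncl, Pi.smul_apply, Matrix.smul_apply, RingHom.id_apply]
    split_ifs <;> simp

theorem trace_multiMatrixIncl (Y : ∀ j, Matrix (Fin (m j)) (Fin (m j)) ℂ) (i : Fin s) :
    (multiMatrixIncl s r m a Y i).trace = ∑ j, a i j * (Y j).trace := by
  simp [multiMatrixIncl, Matrix.trace, Fintype.sum_sigma, Fintype.sum_prod_type]

theorem card_blockIndex (i : Fin s) :
    Fintype.card ((j : Fin r) × (Fin (a i j) × Fin (m j))) = ∑ j, a i j * m j := by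
  simp [Fintype.card_sigma]

end multiMatrixIncl

theorem sum_mul_trace_pi_single_one {R ι : Type*} [CommRing R] [Fintype ι] [DecidableEq ι]
    {n : ι → Type*} [∀ i, Fintype (n i)] [∀ i, DecidableEq (n i)] (c : ι → R) (j : ι) :
    ∑ i, c i * ((Pi.single j 1 : ∀ i, Matrix (n i) (n i) R) i).trace =
      c j * Fintype.card (n j) := by
  rw [Finset.sum_eq_single j (fun i _ h => by simp [Pi.single_eq_of_ne h]) (by simp)]
  simp

theorem sum_gram_mul_eq {R κ ι : Type*} [CommSemiring R] [Fintype κ] [Fintype ι]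
    (b : ι → κ → R) (x : κ → R) (k : κ) :
    ∑ k', (∑ l, b l k * b l k') * x k' = ∑ l, b l k * ∑ k', b l k' * x k' := by
  simp_rw [Finset.sum_mul, Finset.mul_sum, mul_assoc]
  exact Finset.sum_comm

theorem spectral_condition_general
    (s r d : ℕ) (n : Fin s → ℕ) (m : Fin r → ℕ) (a : Fin s → Fin r → ℕ)
    (hm : ∀ j, 0 < m j)
    (hdim : ∀ i, ∑ j, a i j * m j = n i)  -- A m̃ = ñ
    (E : (∀ i, Matrix ((j : Fin r) × (Fin (a i j) × Fin (m j)))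
            ((j : Fin r) × (Fin (a i j) × Fin (m j))) ℂ) →ₗ[ℂ]
          (∀ j, Matrix (Fin (m j)) (Fin (m j)) ℂ))
    -- E is a conditional expectation onto ℬ
    (hEbim : ∀ Y Z X, E (multiMatrixIncl s r m a Y * X * multiMatrixIncl s r m a Z)
      = Y * E X * Z)
    -- a unitary orthonormal basis with d unitaries
    (W : Fin d → ∀ i, Matrix ((j : Fin r) × (Fin (a i j) × Fin (m j)))
          ((j : Fin r) × (Fin (a i j) × Fin (m j))) ℂ)
    (horth : ∀ t t', E (star (W t) * W t') = if t = t' then 1 else 0)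
    (hbasis : ∀ X, X = ∑ t, W t * multiMatrixIncl s r m a (E (star (W t) * X))) :
    (∀ j, ∑ i, a i j * n i = d * m j) ∧
    (∀ j, ∑ j', (∑ i, a i j * a i j') * m j' = d * m j) ∧
    (∀ i, ∑ i', (∑ j, a i j * a i' j) * n i' = d * n i) := by
  have hE : ∀ X Z, E (X * multiMatrixIncl s r m a Z) = E X * Z := fun X Z => by
    simpa [multiMatrixIncl_one] using hEbim 1 Z X
  have hAtn : ∀ j, ∑ i, a i j * n i = d * m j := by
    intro j
    have htr := trace_mulRight_incl_eq_card_mul (multiMatrixInclLinear s r m a) E hE W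
      (star W) (fun t => by simpa using horth t t) hbasis (Pi.single j 1)
    simp only [LinearMap.trace_mulRight_pi, multiMatrixInclLinear_apply, trace_multiMatrixIncl,
      card_blockIndex, hdim, sum_mul_trace_pi_single_one (n := fun j => Fin (m j)),
      Fintype.card_fin] at htr
    have hnat : ∑ i, n i * (a i j * m j) = d * (m j * m j) := by exact_mod_cast htr
    refine Nat.eq_of_mul_eq_mul_right (hm j) ?_
    rw [Finset.sum_mul, mul_assoc, ← hnat]
    exact Finset.sum_congr rfl fun i _ => by ring
  refine ⟨hAtn, fun j => ?_, fun i => ?_⟩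
  · rw [sum_gram_mul_eq]
    simp_rw [hdim]
    exact hAtn j
  · rw [sum_gram_mul_eq (fun j i => a i j)]
    simp_rw [hAtn, ← hdim i, Finset.mul_sum]
    exact Finset.sum_congr rfl fun j _ => mul_left_comm _ _ _

/-- Spectral condition: if a subalgebra system (ℬ ⊆ 𝒜, E) with inclusion matrix
A and dimension vectors m̃, ñ (A m̃ = ñ) admits a unitary orthonormal basis of d
unitaries, then Aᵗ ñ = d m̃; consequently Aᵗ A m̃ = d m̃ and A Aᵗ ñ = d ñ. -/
theorem spectral_condition
    (s r d : ℕ) (n : Fin s → ℕ) (m : Fin r → ℕ) (a : Fin s → Fin r → ℕ)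
    (hn : ∀ i, 0 < n i) (hm : ∀ j, 0 < m j)
    (hdim : ∀ i, ∑ j, a i j * m j = n i)  -- A m̃ = ñ
    (E : (∀ i, Matrix ((j : Fin r) × (Fin (a i j) × Fin (m j)))
            ((j : Fin r) × (Fin (a i j) × Fin (m j))) ℂ) →ₗ[ℂ]
          (∀ j, Matrix (Fin (m j)) (Fin (m j)) ℂ))
    -- E is a conditional expectation onto ℬ
    (hEfix : ∀ Y, E (multiMatrixIncl s r m a Y) = Y)
    (hEbim : ∀ Y Z X, E (multiMatrixIncl s r m a Y * X * multiMatrixIncl s r m a Z)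
      = Y * E X * Z)
    -- a unitary orthonormal basis with d unitaries
    (W : Fin d → ∀ i, Matrix ((j : Fin r) × (Fin (a i j) × Fin (m j)))
          ((j : Fin r) × (Fin (a i j) × Fin (m j))) ℂ)
    (hWu : ∀ t, W t ∈ unitary (∀ i, Matrix ((j : Fin r) × (Fin (a i j) × Fin (m j)))
          ((j : Fin r) × (Fin (a i j) × Fin (m j))) ℂ))
    (horth : ∀ t t', E (star (W t) * W t') = if t = t' then 1 else 0)
    (hbasis : ∀ X, X = ∑ t, W t * multiMatrixIncl s r m a (E (star (W t) * X))) :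
    (∀ j, ∑ i, a i j * n i = d * m j) ∧
    (∀ j, ∑ j', (∑ i, a i j * a i j') * m j' = d * m j) ∧
    (∀ i, ∑ i', (∑ j, a i j * a i' j) * n i' = d * n i) :=
  spectral_condition_general s r d n m a hm hdim E hEbim W horth hbasis
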